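/- Let β > 0 and K > 0 with K/β ≥ 3/2, and set Δ^β(K) = | L_K(β) − e^{β²/2} |. Then Δ^β(K) ≤ C_bias(β) · exp( −(K − β²)²/(2β²) ), where C_bias(β) = β e^{β²} / ( √(2π) (2Φ(3/2) − 1) ). In particular, for any ε > 0, if K ≥ β² + β √( 2 log( 2 C_bias(β)/ε ) ), then Δ^β(K) ≤ ε/2. -/

import Mathlib

open MeasureTheory ProbabilityTheory

/-- `Φ`, the cumulative distribution function of the standard normal distribution. -/
noncomputable def Phi (x : ℝ) : ℝ := ((gaussianReal 0 1) (Set.Iic x)).toReal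

/-- `L_K(s) = e^{s²/2} (Φ((K−s²)/s) − Φ((−K−s²)/s)) / (Φ(K/s) − Φ(−K/s))`. -/
noncomputable def LK (K s : ℝ) : ℝ :=
  Real.exp (s ^ 2 / 2) * (Phi ((K - s ^ 2) / s) - Phi ((-K - s ^ 2) / s)) /
    (Phi (K / s) - Phi (-K / s))

/-- `C_bias(β) = β e^{β²} / (√(2π)(2Φ(3/2) − 1))`. -/
noncomputable def Cbias (β : ℝ) : ℝ :=
  β * Real.exp (β ^ 2) / (Real.sqrt (2 * Real.pi) * (2 * Phi (3 / 2) - 1))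

open Real Set in
noncomputable def phi (t : ℝ) : ℝ := (Real.sqrt (2 * Real.pi))⁻¹ * Real.exp (-t ^ 2 / 2)

open Real Set in
lemma phi_eq : gaussianPDFReal 0 1 = phi := by
  ext t
  simp [gaussianPDFReal, phi]

open Real Set in
lemma phi_nonneg (t : ℝ) : 0 ≤ phi t := by
  rw [← phi_eq]; exact gaussianPDFReal_nonneg 0 1 t

open Real Set in
lemma phi_pos (t : ℝ) : 0 < phi t := by
  rw [← phi_eq]; exact gaussianPDFReal_pos 0 1 t one_ne_zero

open Real Set in
lemma phi_integrable : Integrable phi := by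
  rw [← phi_eq]; exact integrable_gaussianPDFReal 0 1

open Real Set in
lemma phi_total : ∫ t, phi t = 1 := by
  rw [← phi_eq]; exact integral_gaussianPDFReal_eq_one 0 one_ne_zero

open Real Set in
lemma phi_neg (t : ℝ) : phi (-t) = phi t := by simp [phi]

open Real Set in
lemma Phi_eq (x : ℝ) : Phi x = ∫ t in Set.Iic x, phi t := by
  rw [Phi, gaussianReal_apply_eq_integral 0 one_ne_zero, phi_eq,
    ENNReal.toReal_ofReal]
  exact setIntegral_nonneg measurableSet_Iic fun t _ => phi_nonneg t

open Real Set in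
lemma Phi_sub {a b : ℝ} : Phi b - Phi a = ∫ t in a..b, phi t := by
  rw [Phi_eq, Phi_eq]
  exact intervalIntegral.integral_Iic_sub_Iic phi_integrable.integrableOn phi_integrable.integrableOn

open Real Set in
lemma Phi_neg (x : ℝ) : Phi (-x) = 1 - Phi x := by
  have h1 : Phi (-x) = ∫ t in Ioi x, phi t := by
    rw [Phi_eq]
    calc ∫ t in Iic (-x), phi t = ∫ t in Iic (-x), phi (-t) := by
          simp_rw [phi_neg]
      _ = ∫ t in Ioi x, phi t := by rw [integral_comp_neg_Iic]; ring_nf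
  have h2 : Phi x + ∫ t in Ioi x, phi t = 1 := by
    rw [Phi_eq, intervalIntegral.integral_Iic_add_Ioi phi_integrable.integrableOn
      phi_integrable.integrableOn, phi_total]
  linarith

open Real Set in
lemma Phi_mono {a b : ℝ} (hab : a ≤ b) : Phi a ≤ Phi b := by
  have h : 0 ≤ Phi b - Phi a := by
    rw [Phi_sub]
    exact intervalIntegral.integral_nonneg hab fun t _ => phi_nonneg t
  linarith

open Real Set in
lemma Phi_sub_le {a b M : ℝ} (hab : a ≤ b) (hM : ∀ t ∈ Set.Icc a b, phi t ≤ M) :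
    Phi b - Phi a ≤ (b - a) * M := by
  rw [Phi_sub]
  calc ∫ t in a..b, phi t ≤ ∫ _t in a..b, M :=
        intervalIntegral.integral_mono_on hab phi_integrable.intervalIntegrable
          intervalIntegrable_const (fun t ht => hM t ht)
    _ = (b - a) * M := by simp [mul_comm]

open Real Set in
lemma phi_le (t : ℝ) : phi t ≤ (Real.sqrt (2 * Real.pi))⁻¹ := by
  have h : Real.exp (-t ^ 2 / 2) ≤ 1 := by
    rw [show (1:ℝ) = Real.exp 0 by simp]
    apply Real.exp_le_exp.mpr; nlinarith [sq_nonneg t]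
  have hc : (0:ℝ) < (Real.sqrt (2 * Real.pi))⁻¹ := by positivity
  calc phi t ≤ (Real.sqrt (2 * Real.pi))⁻¹ * 1 := by
        rw [phi]; exact mul_le_mul_of_nonneg_left h hc.le
    _ = _ := by ring

open Real Set in
lemma phi_anti {a t : ℝ} (ha : 0 ≤ a) (hat : a ≤ t) : phi t ≤ phi a := by
  have : Real.exp (-t ^ 2 / 2) ≤ Real.exp (-a ^ 2 / 2) := by
    apply Real.exp_le_exp.mpr; nlinarith
  have hc : (0:ℝ) < (Real.sqrt (2 * Real.pi))⁻¹ := by positivity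
  exact mul_le_mul_of_nonneg_left this hc.le

open Real Set in
lemma D0_pos : 0 < 2 * Phi (3 / 2) - 1 := by
  have h : Phi (3/2) - Phi (-(3/2)) = ∫ t in (-(3/2) : ℝ)..(3/2), phi t := Phi_sub
  have hpos : 0 < ∫ t in (-(3/2) : ℝ)..(3/2), phi t :=
    intervalIntegral.intervalIntegral_pos_of_pos phi_integrable.intervalIntegrable
      phi_pos (by norm_num)
  rw [Phi_neg] at h
  linarith

set_option maxHeartbeats 2000000 in
/-- Let `β, K > 0` with `K/β ≥ 3/2` and `Δ^β(K) = |L_K(β) − e^{β²/2}|`. Then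
`Δ^β(K) ≤ C_bias(β) exp(−(K−β²)²/(2β²))`, and for any `ε > 0`, if
`K ≥ β² + β√(2 log(2 C_bias(β)/ε))` then `Δ^β(K) ≤ ε/2`. -/
theorem stmt9 (β K : ℝ) (hβ : 0 < β) (hK : 0 < K) (h32 : 3 / 2 ≤ K / β) :
    |LK K β - Real.exp (β ^ 2 / 2)| ≤
      Cbias β * Real.exp (-(K - β ^ 2) ^ 2 / (2 * β ^ 2)) ∧
    ∀ ε : ℝ, 0 < ε →
      β ^ 2 + β * Real.sqrt (2 * Real.log (2 * Cbias β / ε)) ≤ K →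
      |LK K β - Real.exp (β ^ 2 / 2)| ≤ ε / 2 := by
  have hβ2 : (0:ℝ) < β ^ 2 := by positivity
  have hπ : (0:ℝ) < Real.sqrt (2 * Real.pi) := by positivity
  set c : ℝ := (Real.sqrt (2 * Real.pi))⁻¹ with hc
  have hcpos : 0 < c := by positivity
  set E : ℝ := Real.exp (-(K - β ^ 2) ^ 2 / (2 * β ^ 2)) with hE
  have hEpos : 0 < E := Real.exp_pos _
  set R : ℝ := c * β * Real.exp (β ^ 2 / 2) * E with hR
  set a1 : ℝ := (K - β ^ 2) / β with ha1
  set b1 : ℝ := K / β with hb1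
  set a2 : ℝ := (-K - β ^ 2) / β with ha2
  set b2 : ℝ := -K / β with hb2
  have hab1 : a1 ≤ b1 := by
    rw [ha1, hb1]; gcongr; linarith
  have hab2 : a2 ≤ b2 := by rw [ha2, hb2]; gcongr; linarith
  have hlen1 : b1 - a1 = β := by rw [ha1, hb1]; field_simp; ring
  have hlen2 : b2 - a2 = β := by rw [ha2, hb2]; field_simp; ring
  have hb2nonpos : b2 ≤ 0 := by
    rw [hb2]; apply div_nonpos_of_nonpos_of_nonneg <;> linarith
  -- A bound
  have hA0 : 0 ≤ Phi b1 - Phi a1 := sub_nonneg.mpr (Phi_mono hab1)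
  have hAR : Phi b1 - Phi a1 ≤ R := by
    rcases le_or_gt (β ^ 2) K with hKb | hKb
    · have ha1nn : 0 ≤ a1 := by rw [ha1]; apply div_nonneg (by linarith) hβ.le
      have hbd : Phi b1 - Phi a1 ≤ (b1 - a1) * phi a1 :=
        Phi_sub_le hab1 (fun t ht => phi_anti ha1nn ht.1)
      have hphia1 : phi a1 = c * E := by
        rw [hE, phi, ← hc]
        congr 1
        rw [ha1]
        ring
      have hexp1 : (1:ℝ) ≤ Real.exp (β ^ 2 / 2) := Real.one_le_exp (by positivity)
      rw [hlen1, hphia1] at hbd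
      calc Phi b1 - Phi a1 ≤ β * (c * E) := hbd
        _ ≤ R := by rw [hR]; nlinarith
    · have hbd : Phi b1 - Phi a1 ≤ (b1 - a1) * c :=
        Phi_sub_le hab1 (fun t _ => phi_le t)
      rw [hlen1] at hbd
      have harg : (0:ℝ) ≤ β ^ 2 / 2 + -(K - β ^ 2) ^ 2 / (2 * β ^ 2) := by
        have h1 : β ^ 2 / 2 + -(K - β ^ 2) ^ 2 / (2 * β ^ 2)
            = (β ^ 4 - (K - β ^ 2) ^ 2) / (2 * β ^ 2) := by field_simp; ring
        rw [h1]
        apply div_nonneg _ (by positivity)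
        nlinarith
      have hexp1 : (1:ℝ) ≤ Real.exp (β ^ 2 / 2) * E := by
        rw [hE, ← Real.exp_add]
        exact Real.one_le_exp harg
      calc Phi b1 - Phi a1 ≤ β * c := hbd
        _ ≤ R := by rw [hR]; nlinarith
  -- B bound
  have hB0 : 0 ≤ Phi b2 - Phi a2 := sub_nonneg.mpr (Phi_mono hab2)
  have hBR : Phi b2 - Phi a2 ≤ R := by
    have hbd : Phi b2 - Phi a2 ≤ (b2 - a2) * phi b1 := by
      apply Phi_sub_le hab2
      intro t ht
      have h1 : phi t = phi (-t) := (phi_neg t).symm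
      have h2 : b1 ≤ -t := by
        have := ht.2
        rw [hb2] at this; rw [hb1]
        have : t ≤ -(K / β) := by rw [neg_div] at this; exact this
        linarith
      rw [h1]
      exact phi_anti (le_trans (by norm_num) h32) h2
    rw [hlen2] at hbd
    have hphib1 : phi b1 = c * Real.exp (-(K / β) ^ 2 / 2) := by
      rw [phi, ← hc, hb1]
    have hexp2 : Real.exp (-(K / β) ^ 2 / 2) ≤ Real.exp (β ^ 2 / 2) * E := by
      rw [hE, ← Real.exp_add]
      apply Real.exp_le_exp.mpr
      have h1 : -(K / β) ^ 2 / 2 = -K ^ 2 / (2 * β ^ 2) := by field_simp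
      have h2 : β ^ 2 / 2 + -(K - β ^ 2) ^ 2 / (2 * β ^ 2)
          = (2 * K * β ^ 2 - K ^ 2) / (2 * β ^ 2) := by field_simp; ring
      rw [h1, h2]
      exact div_le_div_of_nonneg_right (by nlinarith) (by positivity)
    calc Phi b2 - Phi a2 ≤ β * phi b1 := hbd
      _ = β * c * Real.exp (-(K / β) ^ 2 / 2) := by rw [hphib1]; ring
      _ ≤ β * c * (Real.exp (β ^ 2 / 2) * E) := by
          apply mul_le_mul_of_nonneg_left hexp2 (by positivity)
      _ = R := by rw [hR]; ring
  -- denominator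
  have hD0 : 0 < 2 * Phi (3 / 2) - 1 := D0_pos
  have hPhib2 : Phi b2 = 1 - Phi b1 := by
    rw [hb2, hb1, neg_div]; exact Phi_neg (K / β)
  have hDge : 2 * Phi (3 / 2) - 1 ≤ Phi b1 - Phi b2 := by
    have := Phi_mono h32
    rw [hPhib2]; linarith
  have hDpos : 0 < Phi b1 - Phi b2 := lt_of_lt_of_le hD0 hDge
  set N : ℝ := Phi a1 - Phi a2 with hN
  set D : ℝ := Phi b1 - Phi b2 with hD
  have hND : |N - D| ≤ R := by
    rw [abs_le]; constructor <;> [linarith; linarith]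
  have hLK : LK K β = Real.exp (β ^ 2 / 2) * N / D := rfl
  have hdiff : LK K β - Real.exp (β ^ 2 / 2) = Real.exp (β ^ 2 / 2) * (N - D) / D := by
    rw [hLK]
    field_simp
  have habs : |LK K β - Real.exp (β ^ 2 / 2)| = Real.exp (β ^ 2 / 2) * |N - D| / D := by
    rw [hdiff, abs_div, abs_mul, abs_of_pos (Real.exp_pos _), abs_of_pos hDpos]
  have key : |LK K β - Real.exp (β ^ 2 / 2)| ≤ Cbias β * E := by
    rw [habs]
    have h1 : Real.exp (β ^ 2 / 2) * |N - D| / D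
        ≤ Real.exp (β ^ 2 / 2) * R / (2 * Phi (3 / 2) - 1) :=
      div_le_div₀ (by positivity)
        (mul_le_mul_of_nonneg_left hND (Real.exp_pos _).le) hD0 hDge
    refine h1.trans (le_of_eq ?_)
    have hexp : Real.exp (β ^ 2) = Real.exp (β ^ 2 / 2) * Real.exp (β ^ 2 / 2) := by
      rw [← Real.exp_add]; ring_nf
    rw [Cbias, hR, hc, hexp]
    have hD0' : (2 : ℝ) * Phi (3 / 2) - 1 ≠ 0 := ne_of_gt hD0
    field_simp
  refine ⟨key, fun ε hε hKε => ?_⟩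
  have hC : 0 < Cbias β := by
    rw [Cbias]
    exact div_pos (by positivity) (mul_pos hπ hD0)
  have h2C : 0 < 2 * Cbias β / ε := by positivity
  refine key.trans ?_
  rcases le_or_gt (Real.log (2 * Cbias β / ε)) 0 with hl | hl
  · have h1 : 2 * Cbias β / ε ≤ 1 := (Real.log_nonpos_iff h2C.le).mp hl
    have hCε : Cbias β ≤ ε / 2 := by
      rw [div_le_one hε] at h1; linarith
    have hsq : Real.sqrt (2 * Real.log (2 * Cbias β / ε)) = 0 :=
      Real.sqrt_eq_zero'.mpr (by linarith)
    rw [hsq, mul_zero, add_zero] at hKε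
    have hE1 : E ≤ 1 := by
      rw [hE]
      apply Real.exp_le_one_iff.mpr
      apply div_nonpos_of_nonpos_of_nonneg (by nlinarith) (by positivity)
    nlinarith
  · set l := Real.log (2 * Cbias β / ε) with hldef
    have h2l : (0:ℝ) ≤ 2 * l := by linarith
    have hKβ' : β * Real.sqrt (2 * l) ≤ K - β ^ 2 := by linarith
    have hsqnn : (0:ℝ) ≤ β * Real.sqrt (2 * l) := by positivity
    have hsq2 : (β * Real.sqrt (2 * l)) ^ 2 = β ^ 2 * (2 * l) := by
      rw [mul_pow, Real.sq_sqrt h2l]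
    have hge : β ^ 2 * (2 * l) ≤ (K - β ^ 2) ^ 2 := by nlinarith
    have hEl : E ≤ Real.exp (-l) := by
      rw [hE]
      apply Real.exp_le_exp.mpr
      rw [div_le_iff₀ (by positivity)]
      nlinarith
    have hexpl : Real.exp (-l) = ε / (2 * Cbias β) := by
      rw [Real.exp_neg, hldef, Real.exp_log h2C, inv_div]
    calc Cbias β * E ≤ Cbias β * (ε / (2 * Cbias β)) := by
          apply mul_le_mul_of_nonneg_left (hexpl ▸ hEl) hC.le
      _ = ε / 2 := by field_simp
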